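/- Let Γ and Δ = {1,…,d} be finite sets, K ≤ Sym(Γ), L ≤ Sym(Δ), m ≥ 2 an integer, and k = min{k_m, d}, where k_m is the number of orbits of K in its componentwise action on Γ^m. If h ∈ (K↑L)^(m), written in the form h = (h_1,…,h_d; h̄) with h_1,…,h_d ∈ Sym(Γ) and h̄ ∈ Sym(Δ), then h̄ ∈ L^[k]. -/

import Mathlib

/-! Testing `h` on an `m`-tuple whose rows (`Function.swap α i ∈ Γ^m`) all coincide shows that
every `h_i` preserves each `K`-orbit on `Γ^m`. Given an ordered partition `P` of `Δ` into at most
`k ≤ k_m` classes, fix representatives of pairwise distinct `K`-orbits, one for each class, and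
let the `i`-th row of `α ∈ Ω^m` be the representative of the class of `i`. An element
`(g_1,…,g_d; τ) ∈ K↑L` with `α^g = α^h` moves every row into the same `K`-orbit as `h` does, and
the orbit of a row records the class of its index; hence `P^τ = P^{h̄}`. -/

open Equiv MulAction Pointwise

/-- The `m`-closure of a permutation group `G ≤ Sym(Ω)`: the largest subgroup of `Sym(Ω)`
having the same orbits as `G` in the induced componentwise action on `Ω^m`. -/
def mClosure {Ω : Type*} (m : ℕ) (G : Subgroup (Equiv.Perm Ω)) : Subgroup (Equiv.Perm Ω) :=
  sSup {H : Subgroup (Equiv.Perm Ω) |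
    ∀ α : Fin m → Ω, MulAction.orbit H α = MulAction.orbit G α}

/-- An ordered partition of `Ω` into at most `m` nonempty classes. -/
structure OrderedPartition (Ω : Type*) (m : ℕ) where
  classes : List (Set Ω)
  length_le : classes.length ≤ m
  nonempty : ∀ s ∈ classes, s.Nonempty
  pairwise_disjoint : classes.Pairwise Disjoint
  covers : ∀ x : Ω, ∃ s ∈ classes, x ∈ s

namespace OrderedPartition

variable {Ω : Type*} {m : ℕ}

theorem ext' {P Q : OrderedPartition Ω m} (h : P.classes = Q.classes) : P = Q := by
  cases P; cases Q; simpa using h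

/-- The natural action of a permutation on an ordered partition, classwise. -/
def act (f : Equiv.Perm Ω) (P : OrderedPartition Ω m) : OrderedPartition Ω m where
  classes := P.classes.map fun s => f '' s
  length_le := by simpa using P.length_le
  nonempty := by
    intro s hs
    obtain ⟨t, ht, rfl⟩ := List.mem_map.mp hs
    exact (P.nonempty t ht).image _
  pairwise_disjoint :=
    P.pairwise_disjoint.map _ fun s t h => (Set.disjoint_image_iff f.injective).mpr h
  covers := by
    intro x
    obtain ⟨s, hs, hx⟩ := P.covers (f⁻¹ x)
    exact ⟨f '' s, List.mem_map.mpr ⟨s, hs, rfl⟩, f⁻¹ x, hx, by simp⟩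

instance : SMul (Equiv.Perm Ω) (OrderedPartition Ω m) := ⟨act⟩

theorem smul_classes (f : Equiv.Perm Ω) (P : OrderedPartition Ω m) :
    (f • P).classes = P.classes.map fun s => f '' s := rfl

instance : MulAction (Equiv.Perm Ω) (OrderedPartition Ω m) where
  one_smul P := ext' (by simp [smul_classes])
  mul_smul f g P := ext' (by
    simp [smul_classes, List.map_map, Function.comp_def, Set.image_image])

end OrderedPartition

/-- The partition `m`-closure `G^[m]` of a permutation group `G ≤ Sym(Ω)`: the largest
subgroup of `Sym(Ω)` having the same orbits as `G` in its induced action on the set of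
ordered partitions of `Ω` into at most `m` nonempty classes. -/
def partClosure {Ω : Type*} (m : ℕ) (G : Subgroup (Equiv.Perm Ω)) : Subgroup (Equiv.Perm Ω) :=
  sSup {H : Subgroup (Equiv.Perm Ω) |
    ∀ P : OrderedPartition Ω m, MulAction.orbit H P = MulAction.orbit G P}

/-- The element `(g_1, …, g_d; ḡ)` of the wreath product in product action:
`(ω^g)_i = (ω_{i^{ḡ⁻¹}})^{g_{i^{ḡ⁻¹}}}`. -/
def wreathElem {Γ Δ : Type*} (gs : Δ → Equiv.Perm Γ) (σ : Equiv.Perm Δ) :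
    Equiv.Perm (Δ → Γ) where
  toFun ω i := gs (σ⁻¹ i) (ω (σ⁻¹ i))
  invFun ω i := (gs i)⁻¹ (ω (σ i))
  left_inv ω := by funext i; simp
  right_inv ω := by funext i; simp

theorem wreathElem_apply {Γ Δ : Type*} (gs : Δ → Equiv.Perm Γ) (σ : Equiv.Perm Δ)
    (ω : Δ → Γ) (i : Δ) : wreathElem gs σ ω i = gs (σ⁻¹ i) (ω (σ⁻¹ i)) := rfl

theorem wreathElem_one {Γ Δ : Type*} :
    wreathElem (fun _ : Δ => (1 : Equiv.Perm Γ)) 1 = 1 := by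
  refine Equiv.ext fun ω => funext fun i => ?_
  simp [wreathElem_apply]

theorem wreathElem_mul {Γ Δ : Type*} (gs hs : Δ → Equiv.Perm Γ) (σ τ : Equiv.Perm Δ) :
    wreathElem gs σ * wreathElem hs τ = wreathElem (fun j => gs (τ j) * hs j) (σ * τ) := by
  refine Equiv.ext fun ω => funext fun i => ?_
  simp [wreathElem_apply, Equiv.Perm.mul_apply, mul_inv_rev]

theorem wreathElem_inv {Γ Δ : Type*} (gs : Δ → Equiv.Perm Γ) (σ : Equiv.Perm Δ) :
    (wreathElem gs σ)⁻¹ = wreathElem (fun j => (gs (σ⁻¹ j))⁻¹) σ⁻¹ := by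
  rw [inv_eq_iff_mul_eq_one, wreathElem_mul]
  simpa using wreathElem_one

/-- The wreath product `K ↑ L` of `K ≤ Sym(Γ)` and `L ≤ Sym(Δ)` in product action,
as a subgroup of `Sym(Γ^Δ)`. -/
def wreathProduct {Γ Δ : Type*} (K : Subgroup (Equiv.Perm Γ)) (L : Subgroup (Equiv.Perm Δ)) :
    Subgroup (Equiv.Perm (Δ → Γ)) where
  carrier := {h | ∃ (gs : Δ → Equiv.Perm Γ) (σ : Equiv.Perm Δ),
    (∀ i, gs i ∈ K) ∧ σ ∈ L ∧ h = wreathElem gs σ}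
  one_mem' := ⟨fun _ => 1, 1, fun _ => K.one_mem, L.one_mem, wreathElem_one.symm⟩
  mul_mem' := by
    rintro f h ⟨gs, σ, hgs, hσ, rfl⟩ ⟨hs, τ, hhs, hτ, rfl⟩
    exact ⟨fun j => gs (τ j) * hs j, σ * τ, fun j => K.mul_mem (hgs _) (hhs _),
      L.mul_mem hσ hτ, wreathElem_mul gs hs σ τ⟩
  inv_mem' := by
    rintro f ⟨gs, σ, hgs, hσ, rfl⟩
    exact ⟨fun j => (gs (σ⁻¹ j))⁻¹, σ⁻¹, fun j => K.inv_mem (hgs _), L.inv_mem hσ,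
      wreathElem_inv gs σ⟩

/-- `k_m`: the number of orbits of `K ≤ Sym(Γ)` in its componentwise action on `Γ^m`. -/
noncomputable def numOrbits {Γ : Type*} (m : ℕ) (K : Subgroup (Equiv.Perm Γ)) : ℕ :=
  Nat.card (MulAction.orbitRel.Quotient K (Fin m → Γ))

/-- A permutation group `L ≤ Sym(Δ)` is primitive if it is transitive and preserves
no nontrivial partition of `Δ` (partitions being identified with equivalence relations). -/
def IsPrimitiveSubgroup {Δ : Type*} (L : Subgroup (Equiv.Perm Δ)) : Prop :=
  (∀ x y : Δ, ∃ g ∈ L, g x = y) ∧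
  ∀ r : Setoid Δ, (∀ g ∈ L, ∀ x y : Δ, r.r x y → r.r (g x) (g y)) → r = ⊥ ∨ r = ⊤

/-- The direct product `K × L ≤ Sym(Γ × Δ)` acting coordinatewise on `Γ × Δ`. -/
def prodSubgroup {Γ Δ : Type*} (K : Subgroup (Equiv.Perm Γ)) (L : Subgroup (Equiv.Perm Δ)) :
    Subgroup (Equiv.Perm (Γ × Δ)) where
  carrier := {h | ∃ k ∈ K, ∃ l ∈ L, h = Equiv.prodCongr k l}
  one_mem' := ⟨1, K.one_mem, 1, L.one_mem, Equiv.ext fun x => rfl⟩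
  mul_mem' := by
    rintro f h ⟨k₁, hk₁, l₁, hl₁, rfl⟩ ⟨k₂, hk₂, l₂, hl₂, rfl⟩
    exact ⟨k₁ * k₂, K.mul_mem hk₁ hk₂, l₁ * l₂, L.mul_mem hl₁ hl₂, Equiv.ext fun x => rfl⟩
  inv_mem' := by
    rintro f ⟨k, hk, l, hl, rfl⟩
    exact ⟨k⁻¹, K.inv_mem hk, l⁻¹, L.inv_mem hl, Equiv.ext fun x => rfl⟩

/-- Given an enumeration (via `sIdx`) of the orbits of `K` on `Γ^m` by `Fin a`,
and `α ∈ Ω^m` with `Ω = Γ^d` viewed as a `d × m` matrix with rows `α[i] = (j ↦ α j i)`,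
`piClasses sIdx α` is the ordered partition `Π(α)` of `Δ = Fin d` whose `ℓ`-th class
consists of the `i` whose row `α[i]` lies in the orbit with the `ℓ`-th smallest
occurring index. -/
def piClasses {Γ : Type*} {d m a : ℕ} (sIdx : (Fin m → Γ) → Fin a)
    (α : Fin m → (Fin d → Γ)) : List (Set (Fin d)) :=
  ((Finset.univ.image fun i : Fin d => sIdx fun j => α j i).sort (· ≤ ·)).map
    fun t => {i : Fin d | sIdx (fun j => α j i) = t}

section OrbitPreserving

variable {M : Type*} [Group M] (X : Type*) [MulAction M X]

def orbitPreserving (G : Subgroup M) : Subgroup M where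
  carrier := {f | ∀ x : X, f • x ∈ orbit G x}
  one_mem' x := by rw [one_smul]; exact mem_orbit_self x
  mul_mem' {f g} hf hg x := by
    rw [mul_smul, ← orbit_eq_iff.mpr (hg x)]
    exact hf (g • x)
  inv_mem' {f} hf x := by
    simpa only [smul_inv_smul, mem_orbit_symm] using hf (f⁻¹ • x)

variable {X}

theorem mem_orbitPreserving {G : Subgroup M} {f : M} :
    f ∈ orbitPreserving X G ↔ ∀ x : X, f • x ∈ orbit G x := Iff.rfl

theorem sSup_sameOrbits_eq_orbitPreserving (G : Subgroup M) :
    sSup {H : Subgroup M | ∀ x : X, orbit H x = orbit G x} = orbitPreserving X G := by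
  refine le_antisymm (sSup_le fun H hH f hf x => ?_) (le_sSup fun x => ?_)
  · exact hH x ▸ mem_orbit x (⟨f, hf⟩ : H)
  · refine Set.Subset.antisymm ?_ fun _ ⟨g, hg⟩ => ⟨⟨g, fun y => mem_orbit y g⟩, hg⟩
    rintro _ ⟨f, rfl⟩
    exact f.2 x

end OrbitPreserving

theorem mem_mClosure_iff {Ω : Type*} {m : ℕ} {G : Subgroup (Perm Ω)} {f : Perm Ω} :
    f ∈ mClosure m G ↔ ∀ α : Fin m → Ω, f • α ∈ orbit G α := by
  rw [mClosure, sSup_sameOrbits_eq_orbitPreserving, mem_orbitPreserving]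

theorem mem_partClosure_iff {Ω : Type*} {k : ℕ} {G : Subgroup (Perm Ω)} {f : Perm Ω} :
    f ∈ partClosure k G ↔ ∀ P : OrderedPartition Ω k, f • P ∈ orbit G P := by
  rw [partClosure, sSup_sameOrbits_eq_orbitPreserving, mem_orbitPreserving]

namespace OrderedPartition

variable {Ω : Type*} {k : ℕ} (P : OrderedPartition Ω k)

theorem exists_mem_get (x : Ω) : ∃ q : Fin P.classes.length, x ∈ P.classes.get q := by
  obtain ⟨s, hs, hx⟩ := P.covers x
  obtain ⟨q, rfl⟩ := List.mem_iff_get.mp hs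
  exact ⟨q, hx⟩

noncomputable def index (x : Ω) : Fin P.classes.length := (P.exists_mem_get x).choose

theorem mem_get_iff_index_eq {x : Ω} {q : Fin P.classes.length} :
    x ∈ P.classes.get q ↔ P.index x = q := by
  have hx : x ∈ P.classes.get (P.index x) := (P.exists_mem_get x).choose_spec
  refine ⟨fun hq => ?_, fun h => h ▸ hx⟩
  by_contra hne
  rcases lt_or_gt_of_ne hne with hlt | hlt
  · exact Set.disjoint_left.mp (P.pairwise_disjoint.rel_get_of_lt hlt) hx hq
  · exact Set.disjoint_left.mp (P.pairwise_disjoint.rel_get_of_lt hlt) hq hx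

theorem smul_eq_smul_of_index_eq {σ τ : Perm Ω} (h : ∀ x, P.index (σ⁻¹ x) = P.index (τ⁻¹ x)) :
    σ • P = τ • P := by
  refine ext' (List.map_congr_left fun s hs => ?_)
  obtain ⟨q, rfl⟩ := List.mem_iff_get.mp hs
  ext x
  simp only [Equiv.image_eq_preimage_symm, ← Perm.inv_def, Set.mem_preimage,
    mem_get_iff_index_eq, h]

end OrderedPartition

theorem nonempty_fin_embedding_of_le_natCard {α : Type*} {n : ℕ} (h : n ≤ Nat.card α) :
    Nonempty (Fin n ↪ α) := by
  cases finite_or_infinite α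
  · have := Fintype.ofFinite α
    exact Function.Embedding.nonempty_of_card_le (by simpa [Nat.card_eq_fintype_card] using h)
  · exact ⟨Fin.valEmbedding.trans (Infinite.natEmbedding α)⟩

section WreathClosure

variable {Γ Δ : Type*} {K : Subgroup (Perm Γ)} {L : Subgroup (Perm Δ)} {m : ℕ}
  {hs : Δ → Perm Γ} {σ : Perm Δ}

theorem swap_wreathElem_smul (gs : Δ → Perm Γ) (τ : Perm Δ) (α : Fin m → Δ → Γ) (i : Δ) :
    Function.swap (wreathElem gs τ • α) i = gs (τ⁻¹ i) • Function.swap α (τ⁻¹ i) := rfl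

theorem exists_wreathElem_smul_eq (hh : wreathElem hs σ ∈ mClosure m (wreathProduct K L))
    (α : Fin m → Δ → Γ) : ∃ (gs : Δ → Perm Γ) (τ : Perm Δ),
      (∀ i, gs i ∈ K) ∧ τ ∈ L ∧ wreathElem gs τ • α = wreathElem hs σ • α := by
  obtain ⟨⟨_, gs, τ, hgs, hτ, rfl⟩, hg⟩ := mem_mClosure_iff.mp hh α
  exact ⟨gs, τ, hgs, hτ, hg⟩

theorem smul_mem_orbit_of_wreathElem_mem_mClosure
    (hh : wreathElem hs σ ∈ mClosure m (wreathProduct K L)) (j : Δ) (β : Fin m → Γ) :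
    hs j • β ∈ orbit K β := by
  obtain ⟨gs, τ, hgs, -, hg⟩ := exists_wreathElem_smul_eq hh fun t (_ : Δ) => β t
  have hrow := congrArg (Function.swap · (σ j)) hg
  simp only [swap_wreathElem_smul, Perm.coe_inv, Equiv.symm_apply_apply] at hrow
  exact ⟨⟨_, hgs _⟩, hrow⟩

theorem exists_mem_forall_mk_swap_eq (hh : wreathElem hs σ ∈ mClosure m (wreathProduct K L))
    (α : Fin m → Δ → Γ) : ∃ τ ∈ L, ∀ i, (⟦Function.swap α (σ⁻¹ i)⟧ : orbitRel.Quotient K (Fin m → Γ))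
      = ⟦Function.swap α (τ⁻¹ i)⟧ := by
  obtain ⟨gs, τ, hgs, hτ, hg⟩ := exists_wreathElem_smul_eq hh α
  refine ⟨τ, hτ, fun i => ?_⟩
  have hrow := congrArg (Function.swap · i) hg
  simp only [swap_wreathElem_smul] at hrow
  calc (⟦Function.swap α (σ⁻¹ i)⟧ : orbitRel.Quotient K (Fin m → Γ))
      = ⟦hs (σ⁻¹ i) • Function.swap α (σ⁻¹ i)⟧ :=
        (Quotient.sound (smul_mem_orbit_of_wreathElem_mem_mClosure hh _ _)).symm
    _ = ⟦(⟨gs (τ⁻¹ i), hgs _⟩ : K) • Function.swap α (τ⁻¹ i)⟧ := by rw [← hrow]; rfl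
    _ = ⟦Function.swap α (τ⁻¹ i)⟧ := orbitRel.Quotient.quotient_smul_eq

end WreathClosure

theorem top_component_mem_partClosure_general {Γ : Type*} {d : ℕ}
    (K : Subgroup (Equiv.Perm Γ)) (L : Subgroup (Equiv.Perm (Fin d)))
    (m : ℕ)
    (hs : Fin d → Equiv.Perm Γ) (σ : Equiv.Perm (Fin d))
    (hh : wreathElem hs σ ∈ mClosure m (wreathProduct K L)) :
    σ ∈ partClosure (min (numOrbits m K) d) L := by
  refine mem_partClosure_iff.mpr fun P => ?_
  obtain ⟨e⟩ := nonempty_fin_embedding_of_le_natCard (P.length_le.trans (min_le_left _ _))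
  obtain ⟨τ, hτ, hrows⟩ := exists_mem_forall_mk_swap_eq hh fun j i => (e (P.index i)).out j
  refine ⟨⟨τ, hτ⟩, (P.smul_eq_smul_of_index_eq fun i => e.injective ?_).symm⟩
  exact (Quotient.out_eq _).symm.trans ((hrows i).trans (Quotient.out_eq _))

/-- If `h = (h_1,…,h_d; h̄) ∈ (K↑L)^(m)` with `m ≥ 2`, then `h̄ ∈ L^[k]`,
where `k = min{k_m, d}`. -/
theorem top_component_mem_partClosure {Γ : Type*} [Fintype Γ] {d : ℕ}
    (K : Subgroup (Equiv.Perm Γ)) (L : Subgroup (Equiv.Perm (Fin d)))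
    (m : ℕ) (hm : 2 ≤ m)
    (hs : Fin d → Equiv.Perm Γ) (σ : Equiv.Perm (Fin d))
    (hh : wreathElem hs σ ∈ mClosure m (wreathProduct K L)) :
    σ ∈ partClosure (min (numOrbits m K) d) L :=
  top_component_mem_partClosure_general K L m hs σ hh
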